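/- arXiv:math/0509621 — 2 statements merged into one kernel-verified Lean document; each statement's English description precedes it below -/
import Mathlib

section
/- Let N be a topological space, m ≥ 1, f : N → ℝ^m a continuous injective map, and h : ℝ^m × [0,1] → ℝ^m a continuous map such that h(·,0) is the identity of ℝ^m and h(·,t) is injective for each t ∈ [0,1] (an ambient isotopy). Then the Gauss maps of f and of h(·,1) ∘ f are equivariantly homotopic. -/
/-- If `f : N → ℝ^m` is continuous injective and
`h : ℝ^m × [0,1] → ℝ^m` is an ambient isotopy (`h(·,0) = id`, each `h(·,t)`
injective, `h` continuous), then the Gauss maps of `f` and of `h(·,1) ∘ f`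
are equivariantly homotopic. -/
theorem gauss_maps_equivariantly_homotopic_of_ambient_isotopy
    {N : Type*} [TopologicalSpace N] (m : ℕ) (hm : 1 ≤ m)
    (f : N → EuclideanSpace ℝ (Fin m)) (hf : Continuous f)
    (hinj : Function.Injective f)
    (h : EuclideanSpace ℝ (Fin m) × unitInterval → EuclideanSpace ℝ (Fin m))
    (hh : Continuous h)
    (h0 : ∀ v, h (v, 0) = v)
    (hinjt : ∀ t : unitInterval, Function.Injective fun v => h (v, t)) :
    ∃ G : {q : N × N // q.1 ≠ q.2} × unitInterval → EuclideanSpace ℝ (Fin m),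
      Continuous G ∧
      (∀ (p : {q : N × N // q.1 ≠ q.2}) (t : unitInterval), ‖G (p, t)‖ = 1) ∧
      (∀ p : {q : N × N // q.1 ≠ q.2},
        G (p, 0) = (‖f p.1.1 - f p.1.2‖)⁻¹ • (f p.1.1 - f p.1.2)) ∧
      (∀ p : {q : N × N // q.1 ≠ q.2},
        G (p, 1) = (‖h (f p.1.1, 1) - h (f p.1.2, 1)‖)⁻¹ • (h (f p.1.1, 1) - h (f p.1.2, 1))) ∧
      (∀ (x y : N) (hxy : x ≠ y) (t : unitInterval),
        G (⟨(y, x), hxy.symm⟩, t) = -G (⟨(x, y), hxy⟩, t)) := by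
  set D : {q : N × N // q.1 ≠ q.2} × unitInterval → EuclideanSpace ℝ (Fin m) :=
    fun z => h (f z.1.1.1, z.2) - h (f z.1.1.2, z.2) with hD
  have hDcont : Continuous D := by
    apply Continuous.sub
    · exact hh.comp ((hf.comp (continuous_fst.comp (continuous_subtype_val.comp
        continuous_fst))).prodMk continuous_snd)
    · exact hh.comp ((hf.comp (continuous_snd.comp (continuous_subtype_val.comp
        continuous_fst))).prodMk continuous_snd)
  have hDne : ∀ z, D z ≠ 0 := by
    rintro ⟨⟨⟨x, y⟩, hxy⟩, t⟩ hz
    apply hxy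
    have := sub_eq_zero.mp hz
    exact hinj (hinjt t this)
  refine ⟨fun z => (‖D z‖)⁻¹ • D z, ?_, ?_, ?_, ?_, ?_⟩
  · exact Continuous.smul (Continuous.inv₀ hDcont.norm (fun z => norm_ne_zero_iff.mpr (hDne z)))
      hDcont
  · intro p t
    rw [norm_smul, norm_inv, norm_norm, inv_mul_cancel₀ (norm_ne_zero_iff.mpr (hDne (p, t)))]
  · intro p
    simp only [hD, h0]
  · intro p
    rfl
  · intro x y hxy t
    have : D (⟨(y, x), hxy.symm⟩, t) = -D (⟨(x, y), hxy⟩, t) := by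
      simp [hD, neg_sub]
    simp only []
    rw [this, norm_neg, smul_neg]
end

section
/- Let N be a locally compact Hausdorff topological space and m ≥ 1. If two continuous injective maps f, g : N → ℝ^m lie in the same path component of the subspace of injective maps of the mapping space C(N, ℝ^m) with the compact-open topology, then their Gauss maps f̃ and g̃ are equivariantly homotopic. -/
/-- For `N` locally compact Hausdorff, if two continuous injective
maps `f, g : N → ℝ^m` lie in the same path component of the subspace of
injective maps of `C(N, ℝ^m)` (compact-open topology), then their Gauss maps
are equivariantly homotopic. -/
theorem gauss_maps_equivariantly_homotopic_of_joined
    {N : Type*} [TopologicalSpace N] [LocallyCompactSpace N] [T2Space N]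
    (m : ℕ) (hm : 1 ≤ m)
    (f g : C(N, EuclideanSpace ℝ (Fin m)))
    (hf : Function.Injective f) (hg : Function.Injective g)
    (hjoined : Joined
      (⟨f, hf⟩ : {F : C(N, EuclideanSpace ℝ (Fin m)) // Function.Injective F})
      (⟨g, hg⟩ : {F : C(N, EuclideanSpace ℝ (Fin m)) // Function.Injective F})) :
    ∃ G : {q : N × N // q.1 ≠ q.2} × unitInterval → EuclideanSpace ℝ (Fin m),
      Continuous G ∧
      (∀ (p : {q : N × N // q.1 ≠ q.2}) (t : unitInterval), ‖G (p, t)‖ = 1) ∧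
      (∀ p : {q : N × N // q.1 ≠ q.2},
        G (p, 0) = (‖f p.1.1 - f p.1.2‖)⁻¹ • (f p.1.1 - f p.1.2)) ∧
      (∀ p : {q : N × N // q.1 ≠ q.2},
        G (p, 1) = (‖g p.1.1 - g p.1.2‖)⁻¹ • (g p.1.1 - g p.1.2)) ∧
      (∀ (x y : N) (hxy : x ≠ y) (t : unitInterval),
        G (⟨(y, x), hxy.symm⟩, t) = -G (⟨(x, y), hxy⟩, t)) := by
  obtain ⟨γ⟩ := hjoined
  set F : {q : N × N // q.1 ≠ q.2} × unitInterval → EuclideanSpace ℝ (Fin m) :=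
    fun pt => (γ pt.2).1 pt.1.1.1 - (γ pt.2).1 pt.1.1.2 with hF
  have hγcont : Continuous fun t : unitInterval => ((γ t).1 : C(N, EuclideanSpace ℝ (Fin m))) :=
    continuous_subtype_val.comp γ.continuous
  have hc1 : Continuous fun pt : {q : N × N // q.1 ≠ q.2} × unitInterval =>
      (γ pt.2).1 pt.1.1.1 :=
    (hγcont.comp continuous_snd).eval (by fun_prop)
  have hc2 : Continuous fun pt : {q : N × N // q.1 ≠ q.2} × unitInterval =>
      (γ pt.2).1 pt.1.1.2 :=
    (hγcont.comp continuous_snd).eval (by fun_prop)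
  have hFcont : Continuous F := hc1.sub hc2
  have hFne : ∀ pt, F pt ≠ 0 := by
    intro pt
    simp only [hF, sub_ne_zero]
    intro h
    exact pt.1.2 ((γ pt.2).2 h)
  refine ⟨fun pt => (‖F pt‖)⁻¹ • F pt, ?_, ?_, ?_, ?_, ?_⟩
  · exact ((hFcont.norm.inv₀ fun pt => norm_ne_zero_iff.mpr (hFne pt)).smul hFcont)
  · intro p t
    rw [norm_smul, norm_inv, norm_norm,
      inv_mul_cancel₀ (norm_ne_zero_iff.mpr (hFne (p, t)))]
  · intro p
    simp only [hF, γ.source]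
  · intro p
    simp only [hF, γ.target]
  · intro x y hxy t
    have : F (⟨(y, x), hxy.symm⟩, t) = -F (⟨(x, y), hxy⟩, t) := by
      simp [hF, neg_sub]
    simp only [this, norm_neg, smul_neg]
end
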